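/- arXiv:math/0605248 — 4 statements merged into one kernel-verified Lean document; each statement's English description precedes it below -/
import Mathlib

section
/- For any nonempty algebraic set Y over B, there is a bijection between the points of Y and the A-homomorphisms from the coordinate algebra Γ_B(Y) to B. -/
/-!  Algebraic geometry over Lie algebras: the free `A`-Lie algebra `A[X]` on
`n` variables is axiomatised by its universal property. -/

universe u

/-- The data exhibiting `P` as the free `A`-Lie algebra `A[x₁,…,xₙ]` over the field `k`:
it contains a copy of `A`, the variables, and has the universal mapping property. -/
structure FreeALie (k : Type u) [Field k] (A : Type u) [LieRing A] [LieAlgebra k A]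
    (n : ℕ) (P : Type u) [LieRing P] [LieAlgebra k P] where
  ι : A →ₗ⁅k⁆ P
  ι_inj : Function.Injective ι
  var : Fin n → P
  lift : ∀ {C : Type u} [LieRing C] [LieAlgebra k C], (A →ₗ⁅k⁆ C) → (Fin n → C) → (P →ₗ⁅k⁆ C)
  lift_ι : ∀ {C : Type u} [LieRing C] [LieAlgebra k C] (ιC : A →ₗ⁅k⁆ C) (p : Fin n → C)
    (a : A), lift ιC p (ι a) = ιC a
  lift_var : ∀ {C : Type u} [LieRing C] [LieAlgebra k C] (ιC : A →ₗ⁅k⁆ C) (p : Fin n → C)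
    (i : Fin n), lift ιC p (var i) = p i
  lift_unique : ∀ {C : Type u} [LieRing C] [LieAlgebra k C] (ιC : A →ₗ⁅k⁆ C) (p : Fin n → C)
    (φ : P →ₗ⁅k⁆ C), (∀ a, φ (ι a) = ιC a) → (∀ i, φ (var i) = p i) → φ = lift ιC p

variable {k A B P : Type u} [Field k] [LieRing A] [LieAlgebra k A]
  [LieRing B] [LieAlgebra k B] [LieRing P] [LieAlgebra k P] {n : ℕ}

/-- The algebraic set `V_B(S)` defined by a system `S ⊆ A[X]` in the affine space `Bⁿ`. -/
def vset (D : FreeALie k A n P) (ιB : A →ₗ⁅k⁆ B) (S : Set P) : Set (Fin n → B) :=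
  {p | ∀ f ∈ S, D.lift ιB p f = 0}

/-- The radical `Rad_B(Y)` of a subset `Y ⊆ Bⁿ`: all Lie polynomials vanishing on `Y`. -/
def rad (D : FreeALie k A n P) (ιB : A →ₗ⁅k⁆ B) (Y : Set (Fin n → B)) : Set P :=
  {f | ∀ p ∈ Y, D.lift ιB p f = 0}

/-- Auxiliary: lift a Lie algebra morphism vanishing on an ideal to the quotient. -/
def lieLiftQ (I : LieIdeal k P) (f : P →ₗ⁅k⁆ B) (h : ∀ x ∈ I, f x = 0) :
    (P ⧸ I) →ₗ⁅k⁆ B :=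
  { toLinearMap := Submodule.liftQ I.toSubmodule f.toLinearMap (fun x hx => h x hx)
    map_lie' := by
      intro x y
      obtain ⟨x, rfl⟩ := Submodule.Quotient.mk_surjective I.toSubmodule x
      obtain ⟨y, rfl⟩ := Submodule.Quotient.mk_surjective I.toSubmodule y
      exact f.map_lie x y }

@[simp] lemma lieLiftQ_mk (I : LieIdeal k P) (f : P →ₗ⁅k⁆ B) (h : ∀ x ∈ I, f x = 0)
    (x : P) : lieLiftQ I f h (LieSubmodule.Quotient.mk (N := I) x) = f x := rfl

/-- for a nonempty algebraic set `Y` over `B` there is a bijection between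
the points of `Y` and the `A`-homomorphisms `Γ_B(Y) → B`; the bijection sends a point
`p` to the homomorphism induced by the evaluation `φ_p`. -/
theorem points_equiv_homs (D : FreeALie k A n P) (ιB : A →ₗ⁅k⁆ B)
    (hιB : Function.Injective ιB) (Y : Set (Fin n → B)) (hne : Y.Nonempty)
    (halg : vset D ιB (rad D ιB Y) = Y)
    (I : LieIdeal k P) (hI : (I : Set P) = rad D ιB Y) :
    ∃ e : Y ≃ {φ : (P ⧸ I) →ₗ⁅k⁆ B // ∀ a : A,
        φ (LieSubmodule.Quotient.mk (N := I) (D.ι a)) = ιB a},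
      ∀ (p : Y) (f : P),
        (e p).1 (LieSubmodule.Quotient.mk (N := I) f) = D.lift ιB p f := by
  -- forward map
  have hvan : ∀ p : Y, ∀ x ∈ I, D.lift ιB (p : Fin n → B) x = 0 := by
    intro p x hx
    have : x ∈ rad D ιB Y := by rw [← hI]; exact hx
    exact this p p.2
  refine ⟨{
    toFun := fun p => ⟨lieLiftQ I (D.lift ιB (p : Fin n → B)) (hvan p), fun a => by
      simp [D.lift_ι]⟩
    invFun := fun φ => ⟨fun i => φ.1 (LieSubmodule.Quotient.mk (N := I) (D.var i)), by
      set ψ : P →ₗ⁅k⁆ B :=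
        φ.1.comp { toLinearMap := I.toSubmodule.mkQ
                   map_lie' := fun {x y} => rfl } with hψ
      set p : Fin n → B := fun i => φ.1 (LieSubmodule.Quotient.mk (N := I) (D.var i))
      have hψeq : ψ = D.lift ιB p := by
        refine D.lift_unique ιB p ψ (fun a => φ.2 a) (fun i => rfl)
      rw [← halg]
      intro f hf
      have hfI : f ∈ I := by rw [SetLike.mem_coe.symm, hI]; exact hf
      have : ψ f = 0 := by
        show φ.1 (LieSubmodule.Quotient.mk (N := I) f) = 0
        rw [(LieSubmodule.Quotient.mk_eq_zero' (N := I)).2 hfI]; exact φ.1.map_zero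
      rw [← hψeq]; exact this⟩
    left_inv := by
      intro p
      ext i
      show lieLiftQ I (D.lift ιB (p : Fin n → B)) (hvan p)
          (LieSubmodule.Quotient.mk (N := I) (D.var i)) = (p : Fin n → B) i
      simp [D.lift_var]
    right_inv := by
      intro φ
      apply Subtype.ext
      set p : Fin n → B := fun i => φ.1 (LieSubmodule.Quotient.mk (N := I) (D.var i))
      set ψ : P →ₗ⁅k⁆ B :=
        φ.1.comp { toLinearMap := I.toSubmodule.mkQ
                   map_lie' := fun {x y} => rfl } with hψ
      have hψeq : ψ = D.lift ιB p := by
        refine D.lift_unique ιB p ψ (fun a => φ.2 a) (fun i => rfl)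
      ext x
      obtain ⟨x, rfl⟩ := Submodule.Quotient.mk_surjective I.toSubmodule x
      show lieLiftQ I (D.lift ιB p) _ (LieSubmodule.Quotient.mk (N := I) x)
        = φ.1 (LieSubmodule.Quotient.mk (N := I) x)
      rw [lieLiftQ_mk, ← hψeq]
      rfl }, fun p f => rfl⟩
end

section
/- If B is A-equationally Noetherian, then every descending chain of algebraic sets Y_1 ⊇ Y_2 ⊇ ... in B^n contains only finitely many distinct sets; equivalently, every ascending chain of radicals Rad_B(Y_1) ⊆ Rad_B(Y_2) ⊆ ... stabilizes. -/
/-!  Algebraic geometry over Lie algebras: the free `A`-Lie algebra `A[X]` on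
`n` variables is axiomatised by its universal property. -/

universe u

variable {k A B P : Type u} [Field k] [LieRing A] [LieAlgebra k A]
  [LieRing B] [LieAlgebra k B] [LieRing P] [LieAlgebra k P] {n : ℕ}

/-- if `B` is `A`-equationally Noetherian then every descending chain of
algebraic sets in `Bⁿ` contains only finitely many distinct sets; equivalently the
ascending chain of their radicals stabilizes. -/
theorem descending_chain_stabilizes
    (Q : ℕ → Type u) [∀ m, LieRing (Q m)] [∀ m, LieAlgebra k (Q m)]
    (D : ∀ m, FreeALie k A m (Q m)) (ιB : A →ₗ⁅k⁆ B) (hιB : Function.Injective ιB)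
    (hNoeth : ∀ (m : ℕ) (S : Set (Q m)), ∃ S₀ ⊆ S, S₀.Finite ∧
        vset (D m) ιB S = vset (D m) ιB S₀)
    (m : ℕ) (Y : ℕ → Set (Fin m → B))
    (halg : ∀ j, ∃ S : Set (Q m), Y j = vset (D m) ιB S)
    (hdesc : ∀ j, Y (j + 1) ⊆ Y j) :
    (∃ N, ∀ j ≥ N, Y j = Y N) ∧
    (∃ N, ∀ j ≥ N, rad (D m) ιB (Y j) = rad (D m) ιB (Y N)) := by
  have hmono : ∀ i j : ℕ, i ≤ j → Y j ⊆ Y i := by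
    intro i j hij
    induction j with
    | zero => simp [Nat.le_zero.mp hij]
    | succ j ih =>
      rcases Nat.lt_or_ge i (j+1) with h | h
      · exact (hdesc j).trans (ih (Nat.lt_succ_iff.mp h))
      · have : i = j + 1 := le_antisymm hij h
        simp [this]
  have hradmono : ∀ i j : ℕ, i ≤ j →
      rad (D m) ιB (Y i) ⊆ rad (D m) ιB (Y j) := by
    intro i j hij f hf p hp
    exact hf p (hmono i j hij hp)
  have hYrad : ∀ j, Y j = vset (D m) ιB (rad (D m) ιB (Y j)) := by
    intro j
    obtain ⟨S, hS⟩ := halg j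
    ext p
    constructor
    · intro hp f hf
      exact hf p hp
    · intro hp
      rw [hS]
      intro f hf
      exact hp f (by intro q hq; rw [hS] at hq; exact hq f hf)
  set S : Set (Q m) := ⋃ j, rad (D m) ιB (Y j) with hSdef
  obtain ⟨S₀, hS₀S, hfin, heq⟩ := hNoeth m S
  have hchoice : ∀ f : S₀, ∃ j, (f : Q m) ∈ rad (D m) ιB (Y j) := by
    intro f
    exact Set.mem_iUnion.mp (hS₀S f.2)
  choose idx hidx using hchoice
  have : Finite ↥S₀ := hfin.to_subtype
  obtain ⟨N, hN⟩ := (Set.finite_range idx).bddAbove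
  have hS₀N : S₀ ⊆ rad (D m) ιB (Y N) := by
    intro f hf
    exact hradmono _ N (hN (Set.mem_range_self ⟨f, hf⟩)) (hidx ⟨f, hf⟩)
  -- vset S ⊆ Y j for all j
  have hVS_sub : ∀ j, vset (D m) ιB S ⊆ Y j := by
    intro j p hp
    rw [hYrad j]
    intro f hf
    exact hp f (Set.mem_iUnion.mpr ⟨j, hf⟩)
  have hYN_sub : Y N ⊆ vset (D m) ιB S := by
    intro p hp
    rw [heq]
    intro f hf
    exact hS₀N hf p hp
  have key : ∀ j ≥ N, Y j = Y N := by
    intro j hj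
    exact le_antisymm (hmono N j hj) ((hYN_sub.trans (hVS_sub j)))
  exact ⟨⟨N, key⟩, ⟨N, fun j hj => by rw [key j hj]⟩⟩
end

section
/- If B is an A-domain, then the union of two algebraic sets over B is algebraic: for consistent systems S_1, S_2 ⊆ A[X], V_B(S_1) ∪ V_B(S_2) = V_B(S) where S = { f_1 ∘ f_2 : f_i ∈ ⟨s_i⟩^A, s_i ∈ S_i, i = 1,2 } (here ⟨s⟩^A denotes the A-relative ideal generated by s and ∘ is the Lie bracket). -/
/-!  Algebraic geometry over Lie algebras: the free `A`-Lie algebra `A[X]` on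
`n` variables is axiomatised by its universal property. -/

universe u

variable {k A B P : Type u} [Field k] [LieRing A] [LieAlgebra k A]
  [LieRing B] [LieAlgebra k B] [LieRing P] [LieAlgebra k P] {n : ℕ}

section ADomain

variable {C : Type u} [LieRing C] [LieAlgebra k C]

/-- The subalgebra `⟨A, x⟩` of `C` generated by the copy of `A` together with `x`. -/
def relSubalgebra (ιC : A →ₗ⁅k⁆ C) (x : C) : LieSubalgebra k C :=
  LieSubalgebra.lieSpan k C (Set.range ιC ∪ {x})

/-- The `A`-relative ideal `⟨x⟩^A` generated by `x`: the ideal of the subalgebra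
`⟨A, x⟩` generated by `x`, regarded as a subset of `C`. -/
def relIdeal (ιC : A →ₗ⁅k⁆ C) (x : C) : Set C :=
  Subtype.val '' {y : relSubalgebra ιC x |
    y ∈ LieSubmodule.lieSpan k (relSubalgebra ιC x)
      {z : relSubalgebra ιC x | (z : C) = x}}

/-- `x` is an `A`-zero divisor in `C` if `x ≠ 0` and there is `y ≠ 0` with
`[⟨x⟩^A, ⟨y⟩^A] = 0`. -/
def IsAZeroDivisor (ιC : A →ₗ⁅k⁆ C) (x : C) : Prop :=
  x ≠ 0 ∧ ∃ y : C, y ≠ 0 ∧ ∀ u ∈ relIdeal ιC x, ∀ v ∈ relIdeal ιC y, ⁅u, v⁆ = 0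

/-- `C` is an `A`-domain if it contains no `A`-zero divisors. -/
def IsADomain (ιC : A →ₗ⁅k⁆ C) : Prop :=
  ∀ x : C, ¬ IsAZeroDivisor ιC x

end ADomain

/-- If a Lie algebra morphism kills `s`, it kills the whole relative ideal `⟨s⟩^A`. -/
lemma lieHom_eq_zero_of_mem_relIdeal (ι : A →ₗ⁅k⁆ P) (φ : P →ₗ⁅k⁆ B) (s : P)
    (hs : φ s = 0) {f : P} (hf : f ∈ relIdeal ι s) : φ f = 0 := by
  obtain ⟨y, hy, rfl⟩ := hf
  set Q := relSubalgebra ι s with hQ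
  let N : LieSubmodule k Q Q :=
    { toSubmodule := LinearMap.ker ((φ.comp Q.incl).toLinearMap)
      lie_mem := by
        intro z m hm
        have hm' : φ (m : P) = 0 := hm
        show φ ((⁅z, m⁆ : ↥Q) : P) = 0
        rw [LieSubalgebra.coe_bracket, LieHom.map_lie, hm', lie_zero] }
  have hle : LieSubmodule.lieSpan k Q {z : Q | (z : P) = s} ≤ N := by
    apply (LieSubmodule.lieSpan_le).mpr
    intro z hz
    show φ (z : P) = 0
    rw [hz]; exact hs
  have := hle hy
  exact this

/-- The relative ideal of the image is contained in the image of the relative ideal. -/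
lemma relIdeal_subset_image (D : FreeALie k A n P) (ιB : A →ₗ⁅k⁆ B)
    (φ : P →ₗ⁅k⁆ B) (hφ : ∀ a, φ (D.ι a) = ιB a) (s : P) :
    relIdeal ιB (φ s) ⊆ φ '' relIdeal D.ι s := by
  set Q := relSubalgebra D.ι s with hQ
  have hsQ : s ∈ Q := LieSubalgebra.subset_lieSpan (Or.inr rfl)
  set I := LieSubmodule.lieSpan k Q {z : Q | (z : P) = s} with hI
  let ψ : ↥Q →ₗ[k] B := φ.toLinearMap.comp Q.incl.toLinearMap
  let T : Submodule k B := Submodule.map ψ (I : Submodule k ↥Q)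
  set R := relSubalgebra ιB (φ s) with hR
  have hRmap : R ≤ LieSubalgebra.map φ Q := by
    rw [hR, relSubalgebra]
    apply LieSubalgebra.lieSpan_le.mpr
    rintro b (⟨a, rfl⟩ | rfl)
    · exact (LieSubalgebra.mem_map (f := φ) Q (ιB a)).mpr
        ⟨D.ι a, LieSubalgebra.subset_lieSpan (Or.inl ⟨a, rfl⟩), hφ a⟩
    · exact (LieSubalgebra.mem_map (f := φ) Q (φ s)).mpr ⟨s, hsQ, rfl⟩
  let N : LieSubmodule k R R :=
    { toSubmodule := Submodule.comap R.incl.toLinearMap T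
      lie_mem := by
        intro z m hm
        simp only [Submodule.mem_carrier, Submodule.mem_comap, LieHom.coe_toLinearMap,
          LieSubalgebra.coe_incl] at hm ⊢
        obtain ⟨w, hw, hwm⟩ := hm
        obtain ⟨q, hq, hqz⟩ := (LieSubalgebra.mem_map (f := φ) Q (z : B)).mp (hRmap z.property)
        refine ⟨⁅(⟨q, hq⟩ : Q), w⁆, I.lie_mem hw, ?_⟩
        have : ψ w = (m : B) := hwm
        show φ (Q.incl ⁅(⟨q, hq⟩ : Q), w⁆) = (↑(⁅z, m⁆ : R) : B)
        rw [LieSubalgebra.coe_incl, LieSubalgebra.coe_bracket, LieSubalgebra.coe_bracket,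
          LieHom.map_lie, hqz]
        congr 1 }
  have hle : LieSubmodule.lieSpan k R {z : R | (z : B) = φ s} ≤ N := by
    apply (LieSubmodule.lieSpan_le).mpr
    intro z hz
    show R.incl.toLinearMap z ∈ T
    refine ⟨⟨s, hsQ⟩, LieSubmodule.subset_lieSpan rfl, ?_⟩
    show φ (Q.incl ⟨s, hsQ⟩) = (z : B)
    simpa using hz.symm
  rintro u ⟨z, hz, rfl⟩
  obtain ⟨w, hw, hwz⟩ := hle hz
  exact ⟨(w : P), ⟨w, hw, rfl⟩, hwz⟩

/-- over an `A`-domain `B`, the union of two algebraic sets given by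
consistent systems `S₁, S₂` is the algebraic set of
`S = { [f₁, f₂] : fᵢ ∈ ⟨sᵢ⟩^A, sᵢ ∈ Sᵢ }`. -/
theorem union_vset_of_isADomain (D : FreeALie k A n P) (ιB : A →ₗ⁅k⁆ B)
    (hιB : Function.Injective ιB) (hdom : IsADomain ιB)
    (S₁ S₂ : Set P) (h₁ : (vset D ιB S₁).Nonempty) (h₂ : (vset D ιB S₂).Nonempty) :
    vset D ιB S₁ ∪ vset D ιB S₂ =
      vset D ιB {g : P | ∃ s₁ ∈ S₁, ∃ s₂ ∈ S₂,
        ∃ f₁ ∈ relIdeal D.ι s₁, ∃ f₂ ∈ relIdeal D.ι s₂, g = ⁅f₁, f₂⁆} := by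
  ext p
  constructor
  · rintro (hp | hp) g ⟨s₁, hs₁, s₂, hs₂, f₁, hf₁, f₂, hf₂, rfl⟩
    · have h0 : D.lift ιB p f₁ = 0 :=
        lieHom_eq_zero_of_mem_relIdeal D.ι (D.lift ιB p) s₁ (hp s₁ hs₁) hf₁
      rw [LieHom.map_lie, h0, zero_lie]
    · have h0 : D.lift ιB p f₂ = 0 :=
        lieHom_eq_zero_of_mem_relIdeal D.ι (D.lift ιB p) s₂ (hp s₂ hs₂) hf₂
      rw [LieHom.map_lie, h0, lie_zero]
  · intro hp
    by_contra hcon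
    simp only [Set.mem_union, not_or] at hcon
    obtain ⟨hp1, hp2⟩ := hcon
    simp only [vset, Set.mem_setOf_eq, not_forall] at hp1 hp2
    obtain ⟨s₁, hs₁, hx⟩ := hp1
    obtain ⟨s₂, hs₂, hy⟩ := hp2
    refine hdom (D.lift ιB p s₁) ⟨hx, D.lift ιB p s₂, hy, ?_⟩
    intro u hu v hv
    obtain ⟨f₁, hf₁, rfl⟩ := relIdeal_subset_image D ιB (D.lift ιB p)
      (fun a => D.lift_ι ιB p a) s₁ hu
    obtain ⟨f₂, hf₂, rfl⟩ := relIdeal_subset_image D ιB (D.lift ιB p)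
      (fun a => D.lift_ι ιB p a) s₂ hv
    rw [← LieHom.map_lie]
    exact hp ⁅f₁, f₂⁆ ⟨s₁, hs₁, s₂, hs₂, f₁, hf₁, f₂, hf₂, rfl⟩
end

section
/- If A-Lie algebras B and C are geometrically equivalent, then the classes of finitely generated members of the prevarieties they generate coincide: (A-pvar(B))_ω = (A-pvar(C))_ω; conversely, if these classes coincide then B and C are geometrically equivalent. -/
/-!  Algebraic geometry over Lie algebras: the free `A`-Lie algebra `A[X]` on
`n` variables is axiomatised by its universal property. -/

universe u

variable {k A B P : Type u} [Field k] [LieRing A] [LieAlgebra k A]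
  [LieRing B] [LieAlgebra k B] [LieRing P] [LieAlgebra k P] {n : ℕ}

section PiLie

/-- Componentwise Lie ring structure on a Pi type. -/
instance piLieRing {ι : Type u} {L : ι → Type u} [∀ i, LieRing (L i)] :
    LieRing (∀ i, L i) :=
  { (inferInstance : AddCommGroup (∀ i, L i)) with
    bracket := fun f g i => ⁅f i, g i⁆
    add_lie := fun _ _ _ => funext fun _ => add_lie _ _ _
    lie_add := fun _ _ _ => funext fun _ => lie_add _ _ _
    lie_self := fun _ => funext fun _ => lie_self _
    leibniz_lie := fun _ _ _ => funext fun _ => leibniz_lie _ _ _ }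

/-- Componentwise Lie algebra structure on a Pi type. -/
instance piLieAlgebra {ι : Type u} {L : ι → Type u} [∀ i, LieRing (L i)]
    [∀ i, LieAlgebra k (L i)] : LieAlgebra k (∀ i, L i) :=
  { (inferInstance : Module k (∀ i, L i)) with
    lie_smul := fun _ _ _ => funext fun _ => lie_smul _ _ _ }

end PiLie

/-- A bundled `A`-Lie algebra over `k`: a Lie `k`-algebra with a designated embedding
of `A`. -/
structure ALieAlg (k A : Type u) [Field k] [LieRing A] [LieAlgebra k A] where
  carrier : Type u
  [lieRing : LieRing carrier]
  [lieAlgebra : LieAlgebra k carrier]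
  str : A →ₗ⁅k⁆ carrier
  str_inj : Function.Injective str

attribute [instance] ALieAlg.lieRing ALieAlg.lieAlgebra

variable {kk : Type u}

/-- The unrestricted `A`-cartesian product of a (nonempty) family of `A`-Lie algebras,
with the diagonal copy of `A`. -/
noncomputable def ALieAlg.pi {ι : Type u} [Nonempty ι] (f : ι → ALieAlg k A) :
    ALieAlg k A where
  carrier := ∀ i, (f i).carrier
  str :=
    { toLinearMap := LinearMap.pi fun i => ((f i).str : A →ₗ[k] (f i).carrier)
      map_lie' := by
        intro x y
        funext i
        show (f i).str ⁅x, y⁆ = ⁅(f i).str x, (f i).str y⁆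
        exact (f i).str.map_lie x y }
  str_inj := fun a b h => (f (Classical.arbitrary ι)).str_inj (congrFun h _)

/-- A class of `A`-Lie algebras is a prevariety if it is closed under `A`-subalgebras
(i.e. under injective `A`-homomorphisms) and under unrestricted `A`-cartesian
products. -/
def IsPrevariety (K : ALieAlg k A → Prop) : Prop :=
  (∀ C₁ C₂ : ALieAlg k A, K C₂ →
      (∃ φ : C₁.carrier →ₗ⁅k⁆ C₂.carrier,
        (∀ a : A, φ (C₁.str a) = C₂.str a) ∧ Function.Injective φ) → K C₁) ∧
  (∀ (ι : Type u) [Nonempty ι] (f : ι → ALieAlg k A),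
      (∀ i, K (f i)) → K (ALieAlg.pi f))

/-- `G` belongs to the prevariety `A-pvar(C)` generated by `C`: it lies in every
prevariety containing `C`. -/
def memPvar (C G : ALieAlg k A) : Prop :=
  ∀ K : ALieAlg k A → Prop, IsPrevariety K → K C → K G

/-- An `A`-Lie algebra is finitely generated (in the category of `A`-Lie algebras) if
it is generated by `A` together with finitely many elements. -/
def ALieAlg.FG (C : ALieAlg k A) : Prop :=
  ∃ s : Finset C.carrier,
    LieSubalgebra.lieSpan k C.carrier (Set.range C.str ∪ ↑s) = ⊤

/-! ### Auxiliary lemmas -/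

/-- Evaluation at a coordinate, as a Lie algebra homomorphism. -/
def evalLieHom {ι : Type u} (L : ι → Type u) [∀ i, LieRing (L i)]
    [∀ i, LieAlgebra k (L i)] (i : ι) : (∀ j, L j) →ₗ⁅k⁆ L i :=
  { (LinearMap.proj i : (∀ j, L j) →ₗ[k] L i) with map_lie' := rfl }

/-- The free `A`-Lie algebra is generated by the copy of `A` and the variables. -/
theorem FreeALie.span_top (D : FreeALie k A n P) :
    LieSubalgebra.lieSpan k P (Set.range D.ι ∪ Set.range D.var) = ⊤ := by
  set L := LieSubalgebra.lieSpan k P (Set.range D.ι ∪ Set.range D.var) with hLdef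
  have hιmem : ∀ a, D.ι a ∈ L := fun a => LieSubalgebra.subset_lieSpan (Or.inl ⟨a, rfl⟩)
  have hvmem : ∀ i, D.var i ∈ L := fun i => LieSubalgebra.subset_lieSpan (Or.inr ⟨i, rfl⟩)
  let ιL : A →ₗ⁅k⁆ ↥L :=
    { toFun := fun a => ⟨D.ι a, hιmem a⟩
      map_add' := fun a b => Subtype.ext (map_add D.ι a b)
      map_smul' := fun c a => Subtype.ext (map_smul D.ι c a)
      map_lie' := fun {a b} => Subtype.ext (LieHom.map_lie D.ι a b) }
  let j : P →ₗ⁅k⁆ ↥L := D.lift ιL (fun i => ⟨D.var i, hvmem i⟩)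
  have h1 : L.incl.comp j = D.lift D.ι D.var :=
    D.lift_unique D.ι D.var _ (fun a => by rw [LieHom.comp_apply, D.lift_ι]; rfl) (fun i => by rw [LieHom.comp_apply, D.lift_var]; rfl)
  have h2 : (LieHom.id : P →ₗ⁅k⁆ P) = D.lift D.ι D.var :=
    D.lift_unique D.ι D.var _ (fun _ => rfl) (fun _ => rfl)
  have h3 : ∀ x : P, ((j x : ↥L) : P) = x := by
    intro x
    have := DFunLike.congr_fun (h1.trans h2.symm) x
    simpa [LieHom.comp_apply] using this
  rw [eq_top_iff]
  intro x _
  have : (j x : P) ∈ L := (j x).2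
  rwa [h3 x] at this

section Key

variable (Q : ℕ → Type u) [∀ m, LieRing (Q m)] [∀ m, LieAlgebra k (Q m)]

/-- Key lemma: if `G ∈ A-pvar(B)`, then the kernel of any `A`-homomorphism
`A[X] → G` is radical-closed with respect to `B`. -/
theorem rad_ker_le_ker (D : ∀ m, FreeALie k A m (Q m)) (B G : ALieAlg k A)
    (hG : memPvar B G) (m : ℕ) (ψ : Q m →ₗ⁅k⁆ G.carrier)
    (hψ : ∀ a, ψ ((D m).ι a) = G.str a) :
    rad (D m) B.str (vset (D m) B.str {x | ψ x = 0}) ⊆ {x | ψ x = 0} := by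
  -- the class of all `M` whose equation-kernels are radical-closed w.r.t. `B`
  set K : ALieAlg k A → Prop := fun M =>
    ∀ (m : ℕ) (ψ : Q m →ₗ⁅k⁆ M.carrier), (∀ a, ψ ((D m).ι a) = M.str a) →
      rad (D m) B.str (vset (D m) B.str {x | ψ x = 0}) ⊆ {x | ψ x = 0} with hKdef
  have hKpre : IsPrevariety K := by
    constructor
    · rintro C₁ C₂ h2 ⟨φ, hφ, hinj⟩ m ψ hψ f hf
      have hker : {x | (φ.comp ψ) x = 0} = {x | ψ x = 0} := by
        ext x
        exact ⟨fun hx => hinj (hx.trans (map_zero φ).symm),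
          fun hx => by simp only [LieHom.comp_apply, Set.mem_setOf_eq] at hx ⊢; rw [hx, map_zero]⟩
      have := h2 m (φ.comp ψ) (fun a => by simp [LieHom.comp_apply, hψ, hφ])
      rw [hker] at this
      exact this hf
    · intro ι _ f hf m ψ hψ x hx
      show ψ x = 0
      funext i
      set ψi : Q m →ₗ⁅k⁆ (f i).carrier := (evalLieHom _ i).comp ψ with hψidef
      have hcompat : ∀ a, ψi ((D m).ι a) = (f i).str a := fun a => by
        show ψ ((D m).ι a) i = (f i).str a
        rw [hψ a]; rfl
      have hsub : {x | ψ x = 0} ⊆ {x | ψi x = 0} := by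
        intro y hy
        show ψ y i = 0
        rw [Set.mem_setOf_eq.mp hy]; rfl
      have hxmem : x ∈ rad (D m) B.str (vset (D m) B.str {x | ψi x = 0}) := by
        intro p hp
        exact hx p (fun h hh => hp h (hsub hh))
      exact hf i m ψi hcompat hxmem
  have hKB : K B := by
    intro m ψ hψ f hf
    have huniq : ψ = (D m).lift B.str (fun i => ψ ((D m).var i)) :=
      (D m).lift_unique B.str _ ψ hψ (fun i => rfl)
    have hmem : (fun i => ψ ((D m).var i)) ∈ vset (D m) B.str {x | ψ x = 0} := by
      intro h hh
      rw [← huniq]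
      exact hh
    show ψ f = 0
    rw [huniq]
    exact hf _ hmem
  exact hG K hKpre hKB m ψ hψ

/-- Forward direction: geometric equivalence transfers finitely generated members of
the generated prevarieties. -/
theorem fwd_pvar (D : ∀ m, FreeALie k A m (Q m)) (B C : ALieAlg k A)
    (h : ∀ (m : ℕ) (S : Set (Q m)),
        rad (D m) B.str (vset (D m) B.str S) = rad (D m) C.str (vset (D m) C.str S))
    (G : ALieAlg k A) (hfg : G.FG) (hB : memPvar B G) : memPvar C G := by
  obtain ⟨s, hs⟩ := hfg
  set n := s.card with hn
  let e := s.equivFin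
  set g : Fin n → G.carrier := fun i => (e.symm i : G.carrier) with hgdef
  set π : Q n →ₗ⁅k⁆ G.carrier := (D n).lift G.str g with hπdef
  have hπι : ∀ a, π ((D n).ι a) = G.str a := (D n).lift_ι _ _
  have hπv : ∀ i, π ((D n).var i) = g i := (D n).lift_var _ _
  have hπsurj : Function.Surjective π := by
    intro y
    have hle : LieSubalgebra.lieSpan k G.carrier (Set.range G.str ∪ ↑s) ≤ π.range := by
      rw [LieSubalgebra.lieSpan_le]
      rintro x (⟨a, rfl⟩ | hx)
      · exact ⟨(D n).ι a, hπι a⟩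
      · refine ⟨(D n).var (e ⟨x, hx⟩), ?_⟩
        show π ((D n).var (e ⟨x, hx⟩)) = x
        rw [hπv]
        simp [hgdef]
    have : y ∈ π.range := hle (by rw [hs]; exact LieSubalgebra.mem_top y)
    rw [LieHom.mem_range] at this
    exact this
  set S₀ : Set (Q n) := {x | π x = 0} with hS₀def
  have hS₀B : rad (D n) B.str (vset (D n) B.str S₀) = S₀ :=
    subset_antisymm (rad_ker_le_ker Q D B G hB n π hπι) (fun f hf p hp => hp f hf)
  have hS₀C : rad (D n) C.str (vset (D n) C.str S₀) = S₀ := (h n S₀).symm.trans hS₀B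
  intro K hK hKC
  by_cases hV : (vset (D n) C.str S₀).Nonempty
  · haveI : Nonempty ↥(vset (D n) C.str S₀) := hV.to_subtype
    set T := ALieAlg.pi (fun _ : ↥(vset (D n) C.str S₀) => C) with hTdef
    have hKT : K T := hK.2 _ _ (fun _ => hKC)
    set σ := Function.surjInv hπsurj with hσdef
    have hσ : ∀ y, π (σ y) = y := Function.surjInv_eq hπsurj
    have wd : ∀ x y : Q n, π x = π y →
        ∀ p : ↥(vset (D n) C.str S₀), (D n).lift C.str p.1 x = (D n).lift C.str p.1 y := by
      intro x y hxy p
      have hmem : x - y ∈ S₀ := by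
        show π (x - y) = 0
        rw [map_sub, hxy, sub_self]
      have hrad : x - y ∈ rad (D n) C.str (vset (D n) C.str S₀) := by
        rw [hS₀C]; exact hmem
      have h0 := hrad p.1 p.2
      rw [map_sub, sub_eq_zero] at h0
      exact h0
    let φ : G.carrier →ₗ⁅k⁆ T.carrier :=
      { toFun := fun y p => (D n).lift C.str p.1 (σ y)
        map_add' := by
          intro y z
          funext p
          have : (D n).lift C.str p.1 (σ (y + z)) = (D n).lift C.str p.1 (σ y + σ z) :=
            wd _ _ (by rw [hσ, map_add, hσ, hσ]) p
          show (D n).lift C.str p.1 (σ (y + z)) =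
            (D n).lift C.str p.1 (σ y) + (D n).lift C.str p.1 (σ z)
          rw [this, map_add]
        map_smul' := by
          intro c y
          funext p
          have : (D n).lift C.str p.1 (σ (c • y)) = (D n).lift C.str p.1 (c • σ y) :=
            wd _ _ (by rw [hσ, map_smul, hσ]) p
          show (D n).lift C.str p.1 (σ (c • y)) = c • (D n).lift C.str p.1 (σ y)
          rw [this, map_smul]
        map_lie' := by
          intro y z
          funext p
          have : (D n).lift C.str p.1 (σ ⁅y, z⁆) = (D n).lift C.str p.1 ⁅σ y, σ z⁆ :=
            wd _ _ (by rw [hσ, LieHom.map_lie, hσ, hσ]) p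
          show (D n).lift C.str p.1 (σ ⁅y, z⁆) =
            ⁅(D n).lift C.str p.1 (σ y), (D n).lift C.str p.1 (σ z)⁆
          rw [this, LieHom.map_lie] }
    refine hK.1 G T hKT ⟨φ, ?_, ?_⟩
    · intro a
      funext p
      have : (D n).lift C.str p.1 (σ (G.str a)) = (D n).lift C.str p.1 ((D n).ι a) :=
        wd _ _ (by rw [hσ, hπι]) p
      show (D n).lift C.str p.1 (σ (G.str a)) = C.str a
      rw [this, (D n).lift_ι]
    · intro x y hxy
      have hrad : σ x - σ y ∈ rad (D n) C.str (vset (D n) C.str S₀) := by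
        intro p hp
        rw [map_sub, sub_eq_zero]
        exact congrFun hxy ⟨p, hp⟩
      rw [hS₀C] at hrad
      have : π (σ x - σ y) = 0 := hrad
      rw [map_sub, hσ, hσ, sub_eq_zero] at this
      exact this
  · -- the variety is empty: `G` is trivial and `A` is degenerate
    have hall : ∀ x : Q n, π x = 0 := by
      intro x
      have hx : x ∈ rad (D n) C.str (vset (D n) C.str S₀) :=
        fun p hp => absurd ⟨p, hp⟩ hV
      rw [hS₀C] at hx
      exact hx
    have hzero : ∀ y : G.carrier, y = 0 := by
      intro y
      obtain ⟨x, rfl⟩ := hπsurj y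
      exact hall x
    set T := ALieAlg.pi (fun _ : PUnit.{u + 1} => C) with hTdef
    have hKT : K T := hK.2 _ _ (fun _ => hKC)
    refine hK.1 G T hKT ⟨0, ?_, ?_⟩
    · intro a
      have ha : a = 0 := G.str_inj ((hzero _).trans (map_zero G.str).symm)
      show (0 : T.carrier) = T.str a
      rw [ha, map_zero]
    · intro x y _
      rw [hzero x, hzero y]

/-- Converse direction: if fg members of the prevarieties transfer, radicals compare. -/
theorem conv_rad (D : ∀ m, FreeALie k A m (Q m)) (B C : ALieAlg k A)
    (h : ∀ G : ALieAlg k A, G.FG → memPvar B G → memPvar C G)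
    (m : ℕ) (S : Set (Q m)) :
    rad (D m) C.str (vset (D m) C.str S) ⊆ rad (D m) B.str (vset (D m) B.str S) := by
  classical
  by_cases hV : (vset (D m) B.str S).Nonempty
  · obtain ⟨q₀, hq₀⟩ := hV
    haveI : Nonempty ↥(vset (D m) B.str S) := ⟨⟨q₀, hq₀⟩⟩
    set T := ALieAlg.pi (fun _ : ↥(vset (D m) B.str S) => B) with hTdef
    let Φ : Q m →ₗ⁅k⁆ T.carrier :=
      { toFun := fun f p => (D m).lift B.str p.1 f
        map_add' := by intro x y; funext p; exact map_add _ _ _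
        map_smul' := by intro c x; funext p; exact map_smul _ _ _
        map_lie' := by intro x y; funext p; exact LieHom.map_lie _ _ _ }
    set G : ALieAlg k A :=
      { carrier := ↥Φ.range
        str := Φ.rangeRestrict.comp (D m).ι
        str_inj := by
          intro a a' haa
          apply B.str_inj
          have hval : Φ ((D m).ι a) = Φ ((D m).ι a') := congrArg Subtype.val haa
          have h2 : (D m).lift B.str q₀ ((D m).ι a) = (D m).lift B.str q₀ ((D m).ι a') :=
            congrFun hval ⟨q₀, hq₀⟩
          rw [(D m).lift_ι, (D m).lift_ι] at h2
          exact h2 } with hGdef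
    have hGstr : ∀ a, G.str a = Φ.rangeRestrict ((D m).ι a) := fun a => rfl
    -- `G` is finitely generated
    have hfg : G.FG := by
      refine ⟨Finset.image (fun i => Φ.rangeRestrict ((D m).var i)) Finset.univ, ?_⟩
      rw [eq_top_iff]
      intro y _
      obtain ⟨x, rfl⟩ := Φ.surjective_rangeRestrict y
      have hx : x ∈ LieSubalgebra.lieSpan k (Q m) (Set.range (D m).ι ∪ Set.range (D m).var) := by
        rw [FreeALie.span_top]
        exact LieSubalgebra.mem_top x
      have hle : LieSubalgebra.lieSpan k (Q m) (Set.range (D m).ι ∪ Set.range (D m).var) ≤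
          LieSubalgebra.comap Φ.rangeRestrict
            (LieSubalgebra.lieSpan k G.carrier
              (Set.range G.str ∪
                ↑(Finset.image (fun i => Φ.rangeRestrict ((D m).var i)) Finset.univ))) := by
        rw [LieSubalgebra.lieSpan_le]
        rintro z (⟨a, rfl⟩ | ⟨i, rfl⟩)
        · exact LieSubalgebra.subset_lieSpan (Or.inl ⟨a, rfl⟩)
        · refine LieSubalgebra.subset_lieSpan (Or.inr ?_)
          simp only [Finset.coe_image, Finset.coe_univ, Set.image_univ]
          exact ⟨i, rfl⟩
      exact hle hx
    -- `G` belongs to `A-pvar(B)`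
    have hBG : memPvar B G := by
      intro K hK hKB
      refine hK.1 G T (hK.2 _ _ (fun _ => hKB)) ⟨Φ.range.incl, ?_, Subtype.coe_injective⟩
      intro a
      show (Φ ((D m).ι a) : T.carrier) = T.str a
      funext p
      exact (D m).lift_ι B.str p.1 a
    have hCG : memPvar C G := h G hfg hBG
    have hkey := rad_ker_le_ker Q D C G hCG m Φ.rangeRestrict (fun a => rfl)
    have hker : {x | Φ.rangeRestrict x = 0} = rad (D m) B.str (vset (D m) B.str S) := by
      ext x
      constructor
      · intro hx p hp
        have : Φ x = 0 := congrArg Subtype.val hx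
        exact congrFun this ⟨p, hp⟩
      · intro hx
        apply Subtype.ext
        show Φ x = 0
        funext p
        exact hx p.1 p.2
    rw [hker] at hkey
    intro f hf
    apply hkey
    intro p hp
    apply hf
    intro z hz
    apply hp
    intro q hq
    exact hq z hz
  · intro f _ p hp
    exact absurd ⟨p, hp⟩ hV

end Key

/-- `A`-Lie algebras `B` and `C` are geometrically equivalent (i.e. all
radicals `Rad_B(S)` and `Rad_C(S)` of systems of equations coincide) if and only if the
classes of finitely generated members of the prevarieties they generate coincide:
`(A-pvar(B))_ω = (A-pvar(C))_ω`. -/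
theorem geometricallyEquivalent_iff_fg_pvar_eq
    (Q : ℕ → Type u) [∀ m, LieRing (Q m)] [∀ m, LieAlgebra k (Q m)]
    (D : ∀ m, FreeALie k A m (Q m)) (B C : ALieAlg k A) :
    (∀ (m : ℕ) (S : Set (Q m)),
        rad (D m) B.str (vset (D m) B.str S) = rad (D m) C.str (vset (D m) C.str S)) ↔
    (∀ G : ALieAlg k A, G.FG → (memPvar B G ↔ memPvar C G)) := by
  constructor
  · intro h G hfg
    exact ⟨fwd_pvar Q D B C h G hfg, fwd_pvar Q D C B (fun m S => (h m S).symm) G hfg⟩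
  · intro h m S
    exact subset_antisymm
      (conv_rad Q D C B (fun G hfg => (h G hfg).mpr) m S)
      (conv_rad Q D B C (fun G hfg => (h G hfg).mp) m S)
end
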